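/- arXiv:1601.02912 — 8 statements merged into one kernel-verified Lean document; each statement's English description precedes it below -/
import Mathlib

section
/- Let J : ℝ^n → ℝ be convex and absolutely one-homogeneous, let N(J) = {u : J(u) = 0} and let c₀ > 0 satisfy c₀·‖w‖ ≤ J(w) for all w ∈ N(J)^⊥. Then every p ∈ N(J)^⊥ with ‖p‖ < c₀ belongs to ∂J(0), and moreover such p satisfies the strict inequality ⟨p, u⟩ < J(u) for every u ∈ ℝ^n whose orthogonal projection onto N(J)^⊥ is nonzero. In particular, ∂J(0) has nonempty relative interior in N(J)^⊥. -/
/-!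
An absolutely one-homogeneous convex `J` is subadditive and even, so `J (u + v) = J u` whenever
`J v = 0`; likewise `⟪p, u + v⟫ = ⟪p, u⟫` for `p ⊥ N(J)`. Both sides of `⟪p, u⟫ ≤ J u` therefore
only see `w = Q₀ u ∈ N(J)ᗮ`, where Cauchy–Schwarz gives `⟪p, w⟫ ≤ ‖p‖ ‖w‖ ≤ c₀ ‖w‖ ≤ J w`, the
middle inequality being strict when `w ≠ 0`.
-/

open RealInnerProductSpace

/-- The subdifferential of `J` at `u`:
`∂J(u) = {p | ∀ v, J v ≥ J u + ⟪p, v - u⟫}`. -/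
def subdiff {n : ℕ} (J : EuclideanSpace ℝ (Fin n) → ℝ)
    (u : EuclideanSpace ℝ (Fin n)) : Set (EuclideanSpace ℝ (Fin n)) :=
  {p | ∀ v, J u + ⟪p, v - u⟫ ≤ J v}

def IsAbsHomogeneous {E : Type*} [AddCommGroup E] [Module ℝ E] (J : E → ℝ) : Prop :=
  ∀ (s : ℝ) (u : E), J (s • u) = |s| * J u

namespace IsAbsHomogeneous

variable {E : Type*} [AddCommGroup E] [Module ℝ E] {J : E → ℝ}

theorem map_zero (hJ : IsAbsHomogeneous J) : J 0 = 0 := by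
  simpa using hJ 0 0

theorem map_neg (hJ : IsAbsHomogeneous J) (u : E) : J (-u) = J u := by
  simpa using hJ (-1) u

/-- Halving `a + b` turns convexity into subadditivity. -/
theorem map_add_le (hJ : IsAbsHomogeneous J) (hconv : ConvexOn ℝ Set.univ J) (a b : E) :
    J (a + b) ≤ J a + J b := by
  have hmid := hconv.2 (Set.mem_univ a) (Set.mem_univ b) (by norm_num : (0 : ℝ) ≤ 1 / 2)
    (by norm_num : (0 : ℝ) ≤ 1 / 2) (by norm_num)
  rw [← smul_add, hJ] at hmid
  simp only [smul_eq_mul] at hmid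
  norm_num at hmid
  linarith

theorem map_add_of_map_eq_zero (hJ : IsAbsHomogeneous J) (hconv : ConvexOn ℝ Set.univ J)
    (u : E) {v : E} (hv : J v = 0) : J (u + v) = J u := by
  have hle := hJ.map_add_le hconv u v
  have hge := hJ.map_add_le hconv (u + v) (-v)
  rw [add_neg_cancel_right, hJ.map_neg, hv] at hge
  linarith

end IsAbsHomogeneous

section Projection

variable {E : Type*} [NormedAddCommGroup E] [InnerProductSpace ℝ E]
  (K : Submodule ℝ E) [K.HasOrthogonalProjection]

theorem IsAbsHomogeneous.map_starProjection {J : E → ℝ} (hJ : IsAbsHomogeneous J)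
    (hconv : ConvexOn ℝ Set.univ J) (hK : ∀ v ∈ Kᗮ, J v = 0) (u : E) :
    J (K.starProjection u) = J u := by
  have h := hJ.map_add_of_map_eq_zero hconv (K.starProjection u)
    (hK _ (K.sub_starProjection_mem_orthogonal u))
  rwa [add_sub_cancel, eq_comm] at h

theorem real_inner_starProjection_of_mem {p : E} (hp : p ∈ K) (u : E) :
    ⟪p, K.starProjection u⟫ = ⟪p, u⟫ := by
  rw [← K.inner_starProjection_left_eq_right, K.starProjection_eq_self_iff.2 hp]

end Projection

theorem real_inner_le_mul_norm {E : Type*} [NormedAddCommGroup E] [InnerProductSpace ℝ E]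
    {p : E} {c : ℝ} (hp : ‖p‖ ≤ c) (w : E) : ⟪p, w⟫ ≤ c * ‖w‖ :=
  (real_inner_le_norm p w).trans (mul_le_mul_of_nonneg_right hp (norm_nonneg w))

theorem real_inner_lt_mul_norm {E : Type*} [NormedAddCommGroup E] [InnerProductSpace ℝ E]
    {p : E} {c : ℝ} (hp : ‖p‖ < c) {w : E} (hw : w ≠ 0) : ⟪p, w⟫ < c * ‖w‖ :=
  (real_inner_le_norm p w).trans_lt (mul_lt_mul_of_pos_right hp (norm_pos_iff.2 hw))

theorem small_orthogonal_elements_in_subdiff_zero_general {n : ℕ}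
    (J : EuclideanSpace ℝ (Fin n) → ℝ)
    (hconv : ConvexOn ℝ Set.univ J)
    (hhom : ∀ (s : ℝ) (u : EuclideanSpace ℝ (Fin n)), J (s • u) = |s| * J u)
    (N : Submodule ℝ (EuclideanSpace ℝ (Fin n)))
    (hN : (N : Set (EuclideanSpace ℝ (Fin n))) = {u | J u = 0})
    (c₀ : ℝ)
    (hlower : ∀ w ∈ Nᗮ, c₀ * ‖w‖ ≤ J w) :
    ∀ p ∈ Nᗮ, ‖p‖ < c₀ →
      p ∈ subdiff J 0 ∧
      ∀ u : EuclideanSpace ℝ (Fin n),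
        (Submodule.orthogonalProjection Nᗮ u : EuclideanSpace ℝ (Fin n)) ≠ 0 → ⟪p, u⟫ < J u := by
  intro p hp hpc₀
  have hJN : ∀ v ∈ Nᗮᗮ, J v = 0 := fun v hv ↦ by
    rw [N.orthogonal_orthogonal, ← SetLike.mem_coe, hN] at hv
    exact hv
  have hreduce : ∀ u, ⟪p, u⟫ = ⟪p, Nᗮ.starProjection u⟫ ∧ J u = J (Nᗮ.starProjection u) :=
    fun u ↦ ⟨(real_inner_starProjection_of_mem _ hp u).symm,
      (IsAbsHomogeneous.map_starProjection _ hhom hconv hJN u).symm⟩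
  refine ⟨fun v ↦ ?_, fun u hu ↦ ?_⟩
  · rw [IsAbsHomogeneous.map_zero hhom, zero_add, sub_zero, (hreduce v).1, (hreduce v).2]
    exact (real_inner_le_mul_norm hpc₀.le _).trans (hlower _ (Nᗮ.starProjection_apply_mem v))
  · rw [(hreduce u).1, (hreduce u).2]
    exact (real_inner_lt_mul_norm hpc₀ hu).trans_le (hlower _ (Nᗮ.starProjection_apply_mem u))

/-- If `c₀ > 0` satisfies `c₀ ‖w‖ ≤ J w` on `N(J)ᗮ`, then every
`p ∈ N(J)ᗮ` with `‖p‖ < c₀` lies in `∂J(0)` and satisfies the strict inequality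
`⟪p, u⟫ < J u` for every `u` whose orthogonal projection onto `N(J)ᗮ` is nonzero. -/
theorem small_orthogonal_elements_in_subdiff_zero {n : ℕ}
    (J : EuclideanSpace ℝ (Fin n) → ℝ)
    (hconv : ConvexOn ℝ Set.univ J)
    (hhom : ∀ (s : ℝ) (u : EuclideanSpace ℝ (Fin n)), J (s • u) = |s| * J u)
    (N : Submodule ℝ (EuclideanSpace ℝ (Fin n)))
    (hN : (N : Set (EuclideanSpace ℝ (Fin n))) = {u | J u = 0})
    (c₀ : ℝ) (hc₀ : 0 < c₀)
    (hlower : ∀ w ∈ Nᗮ, c₀ * ‖w‖ ≤ J w) :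
    ∀ p ∈ Nᗮ, ‖p‖ < c₀ →
      p ∈ subdiff J 0 ∧
      ∀ u : EuclideanSpace ℝ (Fin n),
        (Submodule.orthogonalProjection Nᗮ u : EuclideanSpace ℝ (Fin n)) ≠ 0 → ⟪p, u⟫ < J u :=
  small_orthogonal_elements_in_subdiff_zero_general J hconv hhom N hN c₀ hlower
end

section
/- Let J : ℝ^n → ℝ be convex and absolutely one-homogeneous. Suppose p ∈ ∂J(0) is such that there exists a constant c > 1 with c·p ∈ ∂J(0). If p ∈ ∂J(u) for some u ∈ ℝ^n, then J(u) = 0. -/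
/-!
Testing `c • p ∈ ∂J(0)` against `u` and `-u`, with `J (-u) = J u`, gives `c * |⟪p, u⟫| ≤ J u`,
while testing `p ∈ ∂J(u)` against `0` gives `J u ≤ ⟪p, u⟫`. As `c > 1`, both sides vanish.
-/

open RealInnerProductSpace

section AbsHomogeneous

variable {E : Type*} [AddCommGroup E] [Module ℝ E] {J : E → ℝ}

theorem map_zero_of_abs_homogeneous (hhom : ∀ (s : ℝ) (u : E), J (s • u) = |s| * J u) :
    J 0 = 0 := by
  simpa using hhom 0 0

theorem map_neg_of_abs_homogeneous (hhom : ∀ (s : ℝ) (u : E), J (s • u) = |s| * J u) (u : E) :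
    J (-u) = J u := by
  simpa using hhom (-1) u

end AbsHomogeneous

section Subdiff

variable {n : ℕ} {J : EuclideanSpace ℝ (Fin n) → ℝ} {p u : EuclideanSpace ℝ (Fin n)}

theorem inner_le_of_mem_subdiff_zero (hJ0 : J 0 = 0) (hp : p ∈ subdiff J 0)
    (v : EuclideanSpace ℝ (Fin n)) : ⟪p, v⟫ ≤ J v := by
  simpa [hJ0] using hp v

theorem abs_inner_le_of_mem_subdiff_zero (hJ0 : J 0 = 0) (hJneg : ∀ v, J (-v) = J v)
    (hp : p ∈ subdiff J 0) (v : EuclideanSpace ℝ (Fin n)) : |⟪p, v⟫| ≤ J v := by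
  refine abs_le.mpr ⟨?_, inner_le_of_mem_subdiff_zero hJ0 hp v⟩
  have h := inner_le_of_mem_subdiff_zero hJ0 hp (-v)
  rw [inner_neg_right, hJneg] at h
  linarith

theorem le_inner_of_mem_subdiff (hJ0 : J 0 = 0) (hp : p ∈ subdiff J u) : J u ≤ ⟪p, u⟫ := by
  have h := hp 0
  rw [hJ0, zero_sub, inner_neg_right] at h
  linarith

end Subdiff

theorem relative_interior_subgradient_forces_nullspace_general {n : ℕ}
    (J : EuclideanSpace ℝ (Fin n) → ℝ)
    (hhom : ∀ (s : ℝ) (u : EuclideanSpace ℝ (Fin n)), J (s • u) = |s| * J u)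
    (p : EuclideanSpace ℝ (Fin n))
    (c : ℝ) (hc : 1 < c) (hcp : c • p ∈ subdiff J 0)
    (u : EuclideanSpace ℝ (Fin n)) (hpu : p ∈ subdiff J u) :
    J u = 0 := by
  have hJ0 := map_zero_of_abs_homogeneous hhom
  have hupper : J u ≤ ⟪p, u⟫ := le_inner_of_mem_subdiff hJ0 hpu
  have hlower : c * |⟪p, u⟫| ≤ J u := by
    have h := abs_inner_le_of_mem_subdiff_zero hJ0 (map_neg_of_abs_homogeneous hhom) hcp u
    rwa [real_inner_smul_left, abs_mul, abs_of_pos (by linarith)] at h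
  nlinarith [abs_nonneg ⟪p, u⟫, le_abs_self ⟪p, u⟫]

/-- If `p ∈ ∂J(0)` and `c • p ∈ ∂J(0)` for some `c > 1`, then
`p ∈ ∂J(u)` implies `J u = 0`. -/
theorem relative_interior_subgradient_forces_nullspace {n : ℕ}
    (J : EuclideanSpace ℝ (Fin n) → ℝ)
    (hconv : ConvexOn ℝ Set.univ J)
    (hhom : ∀ (s : ℝ) (u : EuclideanSpace ℝ (Fin n)), J (s • u) = |s| * J u)
    (p : EuclideanSpace ℝ (Fin n)) (hp : p ∈ subdiff J 0)
    (c : ℝ) (hc : 1 < c) (hcp : c • p ∈ subdiff J 0)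
    (u : EuclideanSpace ℝ (Fin n)) (hpu : p ∈ subdiff J u) :
    J u = 0 :=
  relative_interior_subgradient_forces_nullspace_general J hhom p c hc hcp u hpu
end

section
/- Let J : ℝ^n → ℝ be convex and absolutely one-homogeneous and let f ∈ ℝ^n. Then there exists a finite time T > 0 such that for all t ≥ T, the projection P₀(f) of f onto the nullspace N(J) is the unique minimizer of the variational problem u ↦ (1/2)·‖u − f‖² + t·J(u). Equivalently, (f − P₀(f))/t ∈ ∂J(P₀(f)) for all t ≥ T. -/
/-!
`J` is a seminorm whose kernel is `N`, and in finite dimensions such a seminorm dominates a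
multiple of the norm on `Nᗮ` (compactness of the unit sphere of `Nᗮ`). Hence, with
`r = f - P₀ f`, we get `⟪r, v - P₀ f⟫ = ⟪r, v - P₀ v⟫ ≤ C ‖r‖ J(v)`, so `r / t ∈ ∂J(P₀ f)` as
soon as `t ≥ C ‖r‖`. Expanding the square, this subgradient inequality makes `P₀ f` the
minimiser, with a quadratic margin `½‖v - P₀ f‖²` that gives uniqueness.
-/

open RealInnerProductSpace

section ConvexHomogeneous

variable {E : Type*} [AddCommGroup E] [Module ℝ E] {J : E → ℝ}

def ConvexOn.toSeminorm (hconv : ConvexOn ℝ Set.univ J)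
    (hhom : ∀ (s : ℝ) (u : E), J (s • u) = |s| * J u) : Seminorm ℝ E :=
  Seminorm.of J
    (fun a b => by
      have hmid := hconv.2 (Set.mem_univ a) (Set.mem_univ b)
        (by norm_num : (0 : ℝ) ≤ 1 / 2) (by norm_num : (0 : ℝ) ≤ 1 / 2) (by norm_num)
      calc J (a + b) = J ((2 : ℝ) • ((1 / 2 : ℝ) • a + (1 / 2 : ℝ) • b)) := by
            congr 1; module
        _ = 2 * J ((1 / 2 : ℝ) • a + (1 / 2 : ℝ) • b) := by rw [hhom, abs_two]
        _ ≤ 2 * ((1 / 2 : ℝ) • J a + (1 / 2 : ℝ) • J b) := by gcongr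
        _ = J a + J b := by simp only [smul_eq_mul]; ring)
    (fun s u => by rw [hhom, Real.norm_eq_abs])

end ConvexHomogeneous

section Seminorm

theorem Seminorm.map_add_eq_of_eq_zero {𝕜 E : Type*} [SeminormedRing 𝕜] [AddGroup E]
    [SMul 𝕜 E] (p : Seminorm 𝕜 E) (v : E) {w : E} (hw : p w = 0) : p (v + w) = p v := by
  refine le_antisymm ((map_add_le_add p v w).trans (by rw [hw, add_zero])) ?_
  calc p v = p (v + w - w) := by rw [add_sub_cancel_right]
    _ ≤ p (v + w) + p w := map_sub_le_add p _ _
    _ = p (v + w) := by rw [hw, add_zero]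

variable {E : Type*} [NormedAddCommGroup E]

theorem Seminorm.exists_norm_le_mul_of_pos_on [NormedSpace ℝ E] [FiniteDimensional ℝ E]
    (p : Seminorm ℝ E) (hp : Continuous p) (S : Submodule ℝ E)
    (hS : ∀ w ∈ S, w ≠ 0 → 0 < p w) : ∃ C, ∀ w ∈ S, ‖w‖ ≤ C * p w := by
  have hK : IsCompact (Metric.sphere (0 : E) 1 ∩ S) :=
    (isCompact_sphere 0 1).inter_right S.closed_of_finiteDimensional
  have hinv : ContinuousOn (fun w => (p w)⁻¹) (Metric.sphere (0 : E) 1 ∩ S) :=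
    hp.continuousOn.inv₀ fun w hw =>
      (hS w hw.2 (ne_zero_of_mem_unit_sphere ⟨w, hw.1⟩)).ne'
  obtain ⟨C, hC⟩ := hK.exists_bound_of_continuousOn hinv
  refine ⟨C, fun w hw => ?_⟩
  rcases eq_or_ne w 0 with rfl | hw0
  · simp
  have hnorm : 0 < ‖w‖ := norm_pos_iff.2 hw0
  have hpw : 0 < p w := hS w hw hw0
  have hunit : ‖w‖⁻¹ • w ∈ Metric.sphere (0 : E) 1 ∩ S :=
    ⟨by simp [norm_smul, hnorm.ne'], S.smul_mem _ hw⟩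
  have hscale : p (‖w‖⁻¹ • w) = ‖w‖⁻¹ * p w := by
    rw [map_smul_eq_mul, norm_inv, norm_norm]
  have hbound := hC _ hunit
  rw [hscale, Real.norm_of_nonneg (by positivity), mul_inv, inv_inv] at hbound
  rwa [mul_inv_le_iff₀ hpw] at hbound

variable [InnerProductSpace ℝ E] [FiniteDimensional ℝ E]

theorem Seminorm.exists_norm_sub_starProjection_le (p : Seminorm ℝ E) (hp : Continuous p)
    {N : Submodule ℝ E} (hN : ∀ x, x ∈ N ↔ p x = 0) :
    ∃ C, ∀ v, ‖v - N.starProjection v‖ ≤ C * p v := by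
  have hpos : ∀ w ∈ Nᗮ, w ≠ 0 → 0 < p w := fun w hw hw0 =>
    (apply_nonneg p w).lt_of_ne fun h =>
      hw0 (Submodule.disjoint_def.1 N.orthogonal_disjoint w ((hN w).2 h.symm) hw)
  obtain ⟨C, hC⟩ := p.exists_norm_le_mul_of_pos_on hp Nᗮ hpos
  refine ⟨C, fun v => ?_⟩
  have hproj : p (-N.starProjection v) = 0 := by
    rw [map_neg_eq_map, ← hN]; exact N.starProjection_apply_mem v
  simpa [sub_eq_add_neg, p.map_add_eq_of_eq_zero v hproj] using
    hC _ (N.sub_starProjection_mem_orthogonal v)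

theorem Seminorm.exists_inner_sub_starProjection_le (p : Seminorm ℝ E) (hp : Continuous p)
    {N : Submodule ℝ E} (hN : ∀ x, x ∈ N ↔ p x = 0) (f : E) :
    ∃ C, ∀ v, ⟪f - N.starProjection f, v - N.starProjection f⟫ ≤ C * p v := by
  obtain ⟨C, hC⟩ := p.exists_norm_sub_starProjection_le hp hN
  refine ⟨‖f - N.starProjection f‖ * C, fun v => ?_⟩
  have horth : ⟪f - N.starProjection f, N.starProjection v - N.starProjection f⟫ = 0 :=
    N.inner_left_of_mem_orthogonal
      (N.sub_mem (N.starProjection_apply_mem v) (N.starProjection_apply_mem f))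
      (N.sub_starProjection_mem_orthogonal f)
  calc ⟪f - N.starProjection f, v - N.starProjection f⟫
      = ⟪f - N.starProjection f, v - N.starProjection v⟫ := by
        rw [← sub_add_sub_cancel v (N.starProjection v), inner_add_right, horth, add_zero]
    _ ≤ ‖f - N.starProjection f‖ * ‖v - N.starProjection v‖ := real_inner_le_norm _ _
    _ ≤ ‖f - N.starProjection f‖ * (C * p v) := by gcongr; exact hC v
    _ = ‖f - N.starProjection f‖ * C * p v := by ring

end Seminorm

theorem half_norm_sub_sq_add_le_of_inner_le {E : Type*} [NormedAddCommGroup E]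
    [InnerProductSpace ℝ E] {J : E → ℝ} {f u : E} {t : ℝ}
    (h : ∀ v, ⟪f - u, v - u⟫ ≤ t * (J v - J u)) (v : E) :
    1 / 2 * ‖u - f‖ ^ 2 + t * J u + 1 / 2 * ‖v - u‖ ^ 2 ≤
      1 / 2 * ‖v - f‖ ^ 2 + t * J v := by
  have hexpand : ‖v - f‖ ^ 2 = ‖v - u‖ ^ 2 - 2 * ⟪v - u, f - u⟫ + ‖f - u‖ ^ 2 := by
    rw [← norm_sub_sq_real, sub_sub_sub_cancel_right]
  rw [hexpand, norm_sub_rev u f, real_inner_comm]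
  linarith [h v]

theorem one_div_smul_mem_subdiff {n : ℕ} {J : EuclideanSpace ℝ (Fin n) → ℝ}
    {g u : EuclideanSpace ℝ (Fin n)} {t : ℝ} (ht : 0 < t)
    (h : ∀ v, ⟪g, v - u⟫ ≤ t * (J v - J u)) : (1 / t) • g ∈ subdiff J u := fun v => by
  have hscaled : t⁻¹ * ⟪g, v - u⟫ ≤ J v - J u := by rw [inv_mul_le_iff₀ ht]; exact h v
  rw [real_inner_smul_left, one_div]
  linarith

/-- Finite time extinction of the variational method: there is a
finite `T > 0` such that for all `t ≥ T` the projection `P₀ f` of `f` onto the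
nullspace `N(J)` is the unique minimizer of `u ↦ (1/2)‖u - f‖² + t J(u)`;
equivalently `(f - P₀ f)/t ∈ ∂J(P₀ f)`. -/
theorem variational_finite_time_extinction {n : ℕ}
    (J : EuclideanSpace ℝ (Fin n) → ℝ)
    (hconv : ConvexOn ℝ Set.univ J)
    (hhom : ∀ (s : ℝ) (u : EuclideanSpace ℝ (Fin n)), J (s • u) = |s| * J u)
    (N : Submodule ℝ (EuclideanSpace ℝ (Fin n)))
    (hN : (N : Set (EuclideanSpace ℝ (Fin n))) = {u | J u = 0})
    (f : EuclideanSpace ℝ (Fin n)) :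
    ∃ T : ℝ, 0 < T ∧ ∀ t : ℝ, T ≤ t →
      (1 / t) • (f - (Submodule.orthogonalProjection N f : EuclideanSpace ℝ (Fin n))) ∈
        subdiff J (Submodule.orthogonalProjection N f : EuclideanSpace ℝ (Fin n)) ∧
      (∀ u : EuclideanSpace ℝ (Fin n),
        (1 / 2) * ‖(Submodule.orthogonalProjection N f : EuclideanSpace ℝ (Fin n)) - f‖ ^ 2 +
            t * J (Submodule.orthogonalProjection N f : EuclideanSpace ℝ (Fin n)) ≤
          (1 / 2) * ‖u - f‖ ^ 2 + t * J u) ∧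
      (∀ u : EuclideanSpace ℝ (Fin n),
        ((1 / 2) * ‖u - f‖ ^ 2 + t * J u =
          (1 / 2) * ‖(Submodule.orthogonalProjection N f : EuclideanSpace ℝ (Fin n)) - f‖ ^ 2 +
            t * J (Submodule.orthogonalProjection N f : EuclideanSpace ℝ (Fin n))) →
        u = (Submodule.orthogonalProjection N f : EuclideanSpace ℝ (Fin n))) := by
  set p := hconv.toSeminorm hhom
  have hker : ∀ x, x ∈ N ↔ p x = 0 := fun x => by rw [← SetLike.mem_coe, hN]; rfl
  obtain ⟨C, hC⟩ :=
    p.exists_inner_sub_starProjection_le hconv.locallyLipschitz.continuous hker f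
  simp only [← Submodule.starProjection_apply]
  set u := N.starProjection f
  have hJu : J u = 0 := (hker u).1 (N.starProjection_apply_mem f)
  have hT : 0 < max 1 C := lt_max_of_lt_left one_pos
  refine ⟨max 1 C, hT, fun t ht => ?_⟩
  have hsub : ∀ v, ⟪f - u, v - u⟫ ≤ t * (J v - J u) := fun v => by
    rw [hJu, sub_zero]
    exact (hC v).trans
      (mul_le_mul_of_nonneg_right ((le_max_right 1 C).trans ht) (apply_nonneg p v))
  refine ⟨one_div_smul_mem_subdiff (hT.trans_le ht) hsub, fun v => ?_, fun v hv => ?_⟩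
  · linarith [half_norm_sub_sq_add_le_of_inner_le hsub v, sq_nonneg ‖v - u‖]
  · have hmargin := half_norm_sub_sq_add_le_of_inner_le hsub v
    rw [← sub_eq_zero, ← norm_eq_zero, ← sq_eq_zero_iff]
    linarith [sq_nonneg ‖v - u‖]
end

section
/- Let J : ℝ^n → ℝ be convex and absolutely one-homogeneous, let C₀ > 0 satisfy J(v) ≤ C₀·‖v‖ for all v ∈ ℝ^n, and let f ∈ ℝ^n. For t ≥ 0 let u_VM(t) denote the unique minimizer of u ↦ (1/2)·‖u − f‖² + t·J(u). Then the map t ↦ u_VM(t) is Lipschitz continuous: ‖u_VM(t) − u_VM(s)‖ ≤ C₀·|t − s| for all t, s ≥ 0. -/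
/-!
The objective `Eₜ(u) = ½‖u - f‖² + t J(u)` is `1`-strongly convex, so its minimizer `uₜ` satisfies
the quadratic growth bound `Eₜ(u) ≥ Eₜ(uₜ) + ½‖u - uₜ‖²`. Adding this at `u = uₛ` to the same bound
for `Eₛ` at `u = uₜ`, the fidelity terms cancel and `‖uₜ - uₛ‖² ≤ (t - s)(J(uₛ) - J(uₜ))`.
Being convex and one-homogeneous, `J` is subadditive, so the bound `J ≤ C₀‖·‖` makes it
`C₀`-Lipschitz, and dividing by `‖uₜ - uₛ‖` gives the claim.
-/

open Set Filter Topology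

section StrongConvexity

variable {E : Type*} [NormedAddCommGroup E]

theorem StrongConvexOn.add_le_of_isMinOn [NormedSpace ℝ E] {s : Set E} {m : ℝ} {f : E → ℝ}
    {x y : E} (hf : StrongConvexOn s m f) (hmin : IsMinOn f s x) (hx : x ∈ s) (hy : y ∈ s) :
    f x + m / 2 * ‖y - x‖ ^ 2 ≤ f y := by
  have hgrowth : ∀ a ∈ Ioo (0 : ℝ) 1, (1 - a) * (m / 2 * ‖y - x‖ ^ 2) ≤ f y - f x := by
    rintro a ⟨ha₀, ha₁⟩
    have hb : 0 ≤ 1 - a := sub_nonneg.2 ha₁.le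
    have hcomb := hf.2 hy hx ha₀.le hb (add_sub_cancel a 1)
    have hfx : f x ≤ f (a • y + (1 - a) • x) := hmin (hf.1 hy hx ha₀.le hb (add_sub_cancel a 1))
    simp only [smul_eq_mul] at hcomb
    refine le_of_mul_le_mul_left ?_ ha₀
    linarith
  have hlim : Tendsto (fun a : ℝ ↦ (1 - a) * (m / 2 * ‖y - x‖ ^ 2)) (𝓝[>] 0)
      (𝓝 (m / 2 * ‖y - x‖ ^ 2)) := by
    have : Continuous fun a : ℝ ↦ (1 - a) * (m / 2 * ‖y - x‖ ^ 2) := by fun_prop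
    simpa using (this.tendsto 0).mono_left nhdsWithin_le_nhds
  linarith [le_of_tendsto hlim (eventually_of_mem (Ioo_mem_nhdsGT one_pos) hgrowth)]

end StrongConvexity

section InnerProductSpace

variable {E : Type*} [NormedAddCommGroup E] [InnerProductSpace ℝ E]

theorem strongConvexOn_univ_half_norm_sub_sq (f : E) :
    StrongConvexOn univ 1 fun u : E ↦ 1 / 2 * ‖u - f‖ ^ 2 := by
  rw [strongConvexOn_iff_convex]
  have haffine : (fun u : E ↦ 1 / 2 * ‖u - f‖ ^ 2 - 1 / (2 : ℝ) * ‖u‖ ^ 2) =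
      fun u ↦ (-innerₛₗ ℝ f) u + 1 / 2 * ‖f‖ ^ 2 := by
    funext u
    simp only [LinearMap.neg_apply, innerₛₗ_apply_apply, norm_sub_sq_real, real_inner_comm f u]
    ring
  rw [haffine]
  exact ((-innerₛₗ ℝ f).convexOn convex_univ).add_const _

noncomputable def variationalEnergy (J : E → ℝ) (f : E) (t : ℝ) (u : E) : ℝ :=
  1 / 2 * ‖u - f‖ ^ 2 + t * J u

variable {J : E → ℝ} {f : E}

theorem strongConvexOn_variationalEnergy (hJ : ConvexOn ℝ univ J) {t : ℝ} (ht : 0 ≤ t) :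
    StrongConvexOn univ 1 (variationalEnergy J f t) := by
  have := (strongConvexOn_univ_half_norm_sub_sq f).add (uniformConvexOn_zero.2 (hJ.smul ht))
  rw [add_zero] at this
  exact this

theorem norm_sub_sq_le_of_isMinOn_variationalEnergy (hJ : ConvexOn ℝ univ J) {t s : ℝ}
    (ht : 0 ≤ t) (hs : 0 ≤ s) {u v : E} (hu : IsMinOn (variationalEnergy J f t) univ u)
    (hv : IsMinOn (variationalEnergy J f s) univ v) :
    ‖u - v‖ ^ 2 ≤ (t - s) * (J v - J u) := by
  have hvu := (strongConvexOn_variationalEnergy hJ ht).add_le_of_isMinOn hu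
    (mem_univ u) (mem_univ v)
  have huv := (strongConvexOn_variationalEnergy hJ hs).add_le_of_isMinOn hv
    (mem_univ v) (mem_univ u)
  rw [norm_sub_rev v u] at hvu
  simp only [variationalEnergy] at hvu huv
  linarith

end InnerProductSpace

section Subadditive

variable {E : Type*} {J : E → ℝ}

theorem ConvexOn.map_add_le_add_of_map_smul [AddCommGroup E] [Module ℝ E]
    (hJ : ConvexOn ℝ univ J) (hhom : ∀ (c : ℝ) (x : E), 0 ≤ c → J (c • x) = c * J x)
    (x y : E) : J (x + y) ≤ J x + J y := by
  have hmid := hJ.2 (mem_univ x) (mem_univ y) (by norm_num : (0 : ℝ) ≤ 1 / 2)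
    (by norm_num : (0 : ℝ) ≤ 1 / 2) (by norm_num)
  rw [← smul_add, hhom _ _ (by norm_num)] at hmid
  simp only [smul_eq_mul] at hmid
  linarith

theorem abs_sub_le_of_map_add_le_add [SeminormedAddCommGroup E] {C : ℝ}
    (hsub : ∀ x y, J (x + y) ≤ J x + J y) (hbound : ∀ x, J x ≤ C * ‖x‖) (x y : E) :
    |J x - J y| ≤ C * ‖x - y‖ := by
  have hx := hsub (x - y) y
  have hy := hsub (y - x) x
  have hxy := hbound (x - y)
  have hyx := hbound (y - x)
  rw [sub_add_cancel] at hx hy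
  rw [norm_sub_rev] at hyx
  rw [abs_sub_le_iff]
  constructor <;> linarith

end Subadditive

/-- Lipschitz continuity of the variational solution path: if
`J v ≤ C₀ ‖v‖` for all `v` and `uVM t` is, for each `t ≥ 0`, the unique minimizer
of `u ↦ (1/2)‖u - f‖² + t J(u)`, then `‖uVM t - uVM s‖ ≤ C₀ |t - s|` for `t, s ≥ 0`. -/
theorem variational_solution_lipschitz {n : ℕ}
    (J : EuclideanSpace ℝ (Fin n) → ℝ)
    (hconv : ConvexOn ℝ Set.univ J)
    (hhom : ∀ (s : ℝ) (u : EuclideanSpace ℝ (Fin n)), J (s • u) = |s| * J u)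
    (C₀ : ℝ) (hC₀ : 0 < C₀)
    (hupper : ∀ v, J v ≤ C₀ * ‖v‖)
    (f : EuclideanSpace ℝ (Fin n))
    (uVM : ℝ → EuclideanSpace ℝ (Fin n))
    (huVM : ∀ t : ℝ, 0 ≤ t → ∀ u : EuclideanSpace ℝ (Fin n),
      (1 / 2) * ‖uVM t - f‖ ^ 2 + t * J (uVM t) ≤ (1 / 2) * ‖u - f‖ ^ 2 + t * J u) :
    ∀ t s : ℝ, 0 ≤ t → 0 ≤ s → ‖uVM t - uVM s‖ ≤ C₀ * |t - s| := by
  intro t s ht hs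
  have hmin : ∀ r, 0 ≤ r → IsMinOn (variationalEnergy J f r) univ (uVM r) :=
    fun r hr u _ ↦ huVM r hr u
  have hJsub := hconv.map_add_le_add_of_map_smul fun c x hc ↦ by rw [hhom, abs_of_nonneg hc]
  have hJlip := abs_sub_le_of_map_add_le_add hJsub hupper (uVM s) (uVM t)
  have hsq : ‖uVM t - uVM s‖ ^ 2 ≤ C₀ * |t - s| * ‖uVM t - uVM s‖ := calc
    _ ≤ (t - s) * (J (uVM s) - J (uVM t)) :=
        norm_sub_sq_le_of_isMinOn_variationalEnergy hconv ht hs (hmin t ht) (hmin s hs)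
    _ ≤ |t - s| * |J (uVM s) - J (uVM t)| := by rw [← abs_mul]; exact le_abs_self _
    _ ≤ |t - s| * (C₀ * ‖uVM s - uVM t‖) := by gcongr
    _ = C₀ * |t - s| * ‖uVM t - uVM s‖ := by rw [norm_sub_rev]; ring
  nlinarith [mul_nonneg hC₀.le (abs_nonneg (t - s))]
end

section
/- Let J : ℝ^n → ℝ be convex and absolutely one-homogeneous and let f ∈ ℝ^n. Then: (1) for every s ≥ 0 such that s·Q₀(f) ∈ ∂J(0), one has s·Q₀(f) ∈ ∂J(P₀(f)); (2) there exists s₀ > 0 such that s·Q₀(f) ∈ ∂J(0) for all s ∈ [0, s₀]. Consequently, on [0, s₀] the pair v(s) = P₀(f), q(s) = s·Q₀(f) solves the inverse scale space flow: q(0) = 0, q'(s) = f − v(s), and q(s) ∈ ∂J(v(s)) for all s ∈ [0, s₀]. -/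
open RealInnerProductSpace

/-!
Since `J` is a seminorm vanishing exactly on `N = N(J)`, it restricts to a norm on the
finite-dimensional space `Nᗮ`, and compactness of the unit sphere of `Nᗮ` gives `m > 0` with
`m ‖Q₀ v‖ ≤ J v` for all `v`. As `Q₀ f ⊥ N`, Cauchy–Schwarz then yields
`⟪s Q₀ f, v⟫ = s ⟪Q₀ f, Q₀ v⟫ ≤ s ‖Q₀ f‖ ‖Q₀ v‖ ≤ J v` as soon as `s ‖Q₀ f‖ ≤ m`, i.e.
`s Q₀ f ∈ ∂J(0)`. Finally `⟪s Q₀ f, P₀ f⟫ = 0 = J (P₀ f)`, and for a one-homogeneous `J`,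
`p ∈ ∂J(0)` together with `⟪p, u⟫ = J u` gives `p ∈ ∂J(u)`.
-/

section Seminorm

variable {E : Type*} [AddCommGroup E] [Module ℝ E]

theorem ConvexOn.add_le_of_abs_homogeneous {J : E → ℝ} (hconv : ConvexOn ℝ Set.univ J)
    (hhom : ∀ (s : ℝ) (u : E), J (s • u) = |s| * J u) (u v : E) :
    J (u + v) ≤ J u + J v := by
  have hmid := hconv.2 (Set.mem_univ u) (Set.mem_univ v) (by norm_num : (0 : ℝ) ≤ 1 / 2)
    (by norm_num : (0 : ℝ) ≤ 1 / 2) (by norm_num)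
  have hsum : u + v = (2 : ℝ) • ((1 / 2 : ℝ) • u + (1 / 2 : ℝ) • v) := by
    rw [smul_add, smul_smul, smul_smul]; norm_num
  rw [hsum, hhom, abs_two]
  simp only [smul_eq_mul] at hmid
  linarith

def Seminorm.ofConvexOn (J : E → ℝ) (hconv : ConvexOn ℝ Set.univ J)
    (hhom : ∀ (s : ℝ) (u : E), J (s • u) = |s| * J u) : Seminorm ℝ E :=
  Seminorm.of J (hconv.add_le_of_abs_homogeneous hhom) hhom

end Seminorm

theorem Seminorm.exists_pos_mul_norm_le {F : Type*} [NormedAddCommGroup F] [NormedSpace ℝ F]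
    [FiniteDimensional ℝ F] (p : Seminorm ℝ F) (hp : Continuous p)
    (hker : ∀ u, p u = 0 → u = 0) : ∃ m, 0 < m ∧ ∀ u, m * ‖u‖ ≤ p u := by
  have hsphere : ∀ u ∈ Metric.sphere (0 : F) 1, 0 < p u := fun u hu =>
    (apply_nonneg p u).lt_of_ne fun h => by
      simp [hker u h.symm] at hu
  obtain ⟨m, hm, hbound⟩ :=
    (isCompact_sphere (0 : F) 1).exists_forall_le' hp.continuousOn hsphere
  refine ⟨m, hm, fun u => ?_⟩
  rcases eq_or_ne u 0 with rfl | hu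
  · simp
  have hnorm : 0 < ‖u‖ := norm_pos_iff.mpr hu
  have hunit : ‖u‖⁻¹ • u ∈ Metric.sphere (0 : F) 1 := by
    simp [norm_smul, hnorm.ne']
  calc m * ‖u‖ ≤ p (‖u‖⁻¹ • u) * ‖u‖ := by gcongr; exact hbound _ hunit
    _ = p u := by rw [map_smul_eq_mul, norm_inv, norm_norm]; field_simp

section InnerProductSpace

variable {E : Type*} [NormedAddCommGroup E] [InnerProductSpace ℝ E]

theorem Seminorm.exists_pos_mul_norm_sub_starProjection_le [FiniteDimensional ℝ E]
    (p : Seminorm ℝ E) (hp : Continuous p) (N : Submodule ℝ E) (hker : ∀ u, p u = 0 ↔ u ∈ N) :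
    ∃ m, 0 < m ∧ ∀ v, m * ‖v - N.starProjection v‖ ≤ p v := by
  obtain ⟨m, hm, hbound⟩ := (p.comp Nᗮ.subtype).exists_pos_mul_norm_le
    (hp.comp continuous_subtype_val) fun u hu =>
      Subtype.ext (Submodule.disjoint_def.mp N.orthogonal_disjoint u ((hker u).mp hu) u.2)
  refine ⟨m, hm, fun v => ?_⟩
  have hPv : p (N.starProjection v) = 0 := (hker _).mpr (N.starProjection_apply_mem v)
  calc m * ‖v - N.starProjection v‖
      ≤ p (v - N.starProjection v) := hbound ⟨_, N.sub_starProjection_mem_orthogonal v⟩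
    _ ≤ p v + p (N.starProjection v) := map_sub_le_add p _ _
    _ = p v := by rw [hPv, add_zero]

end InnerProductSpace

section Subdiff

variable {n : ℕ} {J : EuclideanSpace ℝ (Fin n) → ℝ}

theorem mem_subdiff_zero_iff (hJ0 : J 0 = 0) {p : EuclideanSpace ℝ (Fin n)} :
    p ∈ subdiff J 0 ↔ ∀ v, ⟪p, v⟫ ≤ J v := by
  simp [subdiff, hJ0]

theorem mem_subdiff_of_mem_subdiff_zero (hJ0 : J 0 = 0) {p u : EuclideanSpace ℝ (Fin n)}
    (hp : p ∈ subdiff J 0) (hpu : ⟪p, u⟫ = J u) : p ∈ subdiff J u := fun v => by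
  have := (mem_subdiff_zero_iff hJ0).mp hp v
  rw [inner_sub_right, hpu]
  linarith

theorem mem_subdiff_zero_of_mem_orthogonal (hJ0 : J 0 = 0)
    {N : Submodule ℝ (EuclideanSpace ℝ (Fin n))} {m : ℝ}
    (hJ : ∀ v, m * ‖v - N.starProjection v‖ ≤ J v) {p : EuclideanSpace ℝ (Fin n)}
    (hp : p ∈ Nᗮ) (hpm : ‖p‖ ≤ m) : p ∈ subdiff J 0 := by
  refine (mem_subdiff_zero_iff hJ0).mpr fun v => ?_
  have hPv : ⟪p, N.starProjection v⟫ = 0 :=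
    N.inner_left_of_mem_orthogonal (N.starProjection_apply_mem v) hp
  calc ⟪p, v⟫ = ⟪p, v - N.starProjection v⟫ := by rw [inner_sub_right, hPv, sub_zero]
    _ ≤ ‖p‖ * ‖v - N.starProjection v‖ := real_inner_le_norm _ _
    _ ≤ m * ‖v - N.starProjection v‖ := by gcongr
    _ ≤ J v := hJ v

end Subdiff

/-- Initial behavior of the inverse scale space flow:
(1) if `s • Q₀ f ∈ ∂J(0)` then `s • Q₀ f ∈ ∂J(P₀ f)`; (2) there is `s₀ > 0` with
`s • Q₀ f ∈ ∂J(0)` for all `s ∈ [0, s₀]`; consequently, on `[0, s₀]` the pair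
`v(s) = P₀ f`, `q(s) = s • Q₀ f` solves the inverse scale space flow:
`q(0) = 0`, `q'(s) = f - v(s)`, `q(s) ∈ ∂J(v(s))`. -/
theorem inverse_scale_space_initial_behavior {n : ℕ}
    (J : EuclideanSpace ℝ (Fin n) → ℝ)
    (hconv : ConvexOn ℝ Set.univ J)
    (hhom : ∀ (s : ℝ) (u : EuclideanSpace ℝ (Fin n)), J (s • u) = |s| * J u)
    (N : Submodule ℝ (EuclideanSpace ℝ (Fin n)))
    (hN : (N : Set (EuclideanSpace ℝ (Fin n))) = {u | J u = 0})
    (f : EuclideanSpace ℝ (Fin n)) :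
    (∀ s : ℝ, 0 ≤ s →
      s • (f - (Submodule.orthogonalProjectionOnto N f : EuclideanSpace ℝ (Fin n))) ∈ subdiff J 0 →
      s • (f - (Submodule.orthogonalProjectionOnto N f : EuclideanSpace ℝ (Fin n))) ∈
        subdiff J (Submodule.orthogonalProjectionOnto N f : EuclideanSpace ℝ (Fin n))) ∧
    (∃ s₀ : ℝ, 0 < s₀ ∧
      (∀ s ∈ Set.Icc (0 : ℝ) s₀,
        s • (f - (Submodule.orthogonalProjectionOnto N f : EuclideanSpace ℝ (Fin n))) ∈ subdiff J 0) ∧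
      ((0 : ℝ) • (f - (Submodule.orthogonalProjectionOnto N f : EuclideanSpace ℝ (Fin n))) = 0) ∧
      (∀ s ∈ Set.Icc (0 : ℝ) s₀,
        HasDerivAt
          (fun σ : ℝ =>
            σ • (f - (Submodule.orthogonalProjectionOnto N f : EuclideanSpace ℝ (Fin n))))
          (f - (Submodule.orthogonalProjectionOnto N f : EuclideanSpace ℝ (Fin n))) s ∧
        s • (f - (Submodule.orthogonalProjectionOnto N f : EuclideanSpace ℝ (Fin n))) ∈
          subdiff J (Submodule.orthogonalProjectionOnto N f : EuclideanSpace ℝ (Fin n)))) := by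
  set P : EuclideanSpace ℝ (Fin n) :=
    (Submodule.orthogonalProjectionOnto N f : EuclideanSpace ℝ (Fin n))
  set g : EuclideanSpace ℝ (Fin n) := f - P
  let p := Seminorm.ofConvexOn J hconv hhom
  have hJ0 : J 0 = 0 := map_zero p
  have hker : ∀ u, p u = 0 ↔ u ∈ N := fun u => by rw [← SetLike.mem_coe, hN]; rfl
  have hPN : P ∈ N := N.starProjection_apply_mem f
  have hg : g ∈ Nᗮ := N.sub_starProjection_mem_orthogonal f
  have hsub : ∀ s : ℝ, 0 ≤ s → s • g ∈ subdiff J 0 → s • g ∈ subdiff J P := fun s _ hs =>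
    mem_subdiff_of_mem_subdiff_zero hJ0 hs <| by
      rw [N.inner_left_of_mem_orthogonal hPN (Nᗮ.smul_mem s hg)]
      exact ((hker P).mpr hPN).symm
  obtain ⟨m, hm, hbound⟩ := p.exists_pos_mul_norm_sub_starProjection_le
    (continuousOn_univ.mp (hconv.continuousOn isOpen_univ)) N hker
  -- `m / ‖g‖` would be the junk value `0` when `g = 0`
  have hzero : ∀ s ∈ Set.Icc 0 (m / (‖g‖ + 1)), s • g ∈ subdiff J 0 := fun s hs =>
    mem_subdiff_zero_of_mem_orthogonal hJ0 hbound (Nᗮ.smul_mem s hg) <|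
      calc ‖s • g‖ = s * ‖g‖ := by rw [norm_smul, Real.norm_of_nonneg hs.1]
        _ ≤ m / (‖g‖ + 1) * (‖g‖ + 1) := by
          gcongr
          exacts [hs.2, le_add_of_nonneg_right zero_le_one]
        _ = m := div_mul_cancel₀ _ (by positivity)
  refine ⟨hsub, m / (‖g‖ + 1), by positivity, hzero, zero_smul _ _,
    fun s hs => ⟨?_, hsub s hs.1 (hzero s hs)⟩⟩
  simpa using (hasDerivAt_id s).smul_const g
end

section
/- Let J : ℝ^n → ℝ be convex and absolutely one-homogeneous satisfying (PS) and (MINSUB). Let f ∈ ℝ^n, let 0 = t₀ < t₁ < ⋯ < t_K be times and p₁, …, p_K ∈ ℝ^n, and let u : [0, t_K] → ℝ^n be the piecewise-linear gradient flow: u(0) = f, and u(t) = u(t_i) − (t − t_i)·p_{i+1} for t ∈ [t_i, t_{i+1}], where for each i, p_{i+1} is the unique minimal-norm element of ∂J(u(t_i)) and p_{i+1} ∈ ∂J(u(t)) for all t ∈ [t_i, t_{i+1}]. Then: (1) for every i and every t ∈ [t_i, t_{i+1}], p_j ∈ ∂J(u(t)) for all 1 ≤ j ≤ i+1 (subgradients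 persist along the flow); (2) for every t ∈ (0, t_K], (f − u(t))/t ∈ ∂J(u(t)); equivalently, u(t) is the unique minimizer of the variational problem v ↦ (1/2)·‖v − f‖² + t·J(v), so the gradient flow solution and the variational (ROF-type) solution coincide. -/
open RealInnerProductSpace

/-!
Along the `i`-th segment the flow moves in the direction `-pᵢ` with `pᵢ` the minimal-norm
subgradient at its start. By (MINSUB) every other subgradient `q` there has `⟪q, pᵢ⟫ = ‖pᵢ‖²`,
so `⟪q, u⟫` and `⟪pᵢ, u⟫ = J u` change at the same rate along the segment, and `q` stays a
subgradient (for one-homogeneous `J`, `q ∈ ∂J(u)` iff `⟪q, ·⟫ ≤ J` and `⟪q, u⟫ = J u`).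
Hence all of `p₁, …, p_{i+1}` are subgradients at `u s`, and `(f - u s) / s`, being an average of
them weighted by the time spent on each segment, lies in the convex set `∂J(u s)`. This is the
optimality condition of `v ↦ ½‖v - f‖² + s J v`, which is strongly convex.
-/

open Set
open scoped Pointwise

section Subdifferential

variable {n : ℕ} {J : EuclideanSpace ℝ (Fin n) → ℝ}

theorem convex_subdiff (u : EuclideanSpace ℝ (Fin n)) : Convex ℝ (subdiff J u) := by
  intro x hx y hy a b ha hb hab v
  have := add_le_add (mul_le_mul_of_nonneg_left (hx v) ha) (mul_le_mul_of_nonneg_left (hy v) hb)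
  rw [inner_add_left, real_inner_smul_left, real_inner_smul_left]
  linear_combination this + (J v - J u) * hab

theorem mem_subdiff_iff_of_homogeneous
    (hhom : ∀ (s : ℝ) (u : EuclideanSpace ℝ (Fin n)), J (s • u) = |s| * J u)
    {u q : EuclideanSpace ℝ (Fin n)} :
    q ∈ subdiff J u ↔ (∀ v, ⟪q, v⟫ ≤ J v) ∧ ⟪q, u⟫ = J u := by
  constructor
  · intro hq
    have hJ0 : J 0 = 0 := by simpa using hhom 0 0
    have h2u : J ((2 : ℝ) • u) = 2 * J u := by rw [hhom]; norm_num
    have hu : ⟪q, u⟫ = J u := by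
      have h0 := hq 0
      have h2 := hq ((2 : ℝ) • u)
      rw [hJ0, zero_sub, inner_neg_right] at h0
      rw [h2u, show (2 : ℝ) • u - u = u by module] at h2
      linarith
    refine ⟨fun v => ?_, hu⟩
    have := hq v
    rw [inner_sub_right] at this
    linarith
  · rintro ⟨hle, hu⟩ v
    rw [inner_sub_right]
    linarith [hle v]

theorem mem_subdiff_sub_smul
    (hhom : ∀ (s : ℝ) (u : EuclideanSpace ℝ (Fin n)), J (s • u) = |s| * J u)
    {w p q : EuclideanSpace ℝ (Fin n)} {τ : ℝ} (horth : ⟪p, p - q⟫ = 0)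
    (hp : p ∈ subdiff J w) (hq : q ∈ subdiff J w) (hpτ : p ∈ subdiff J (w - τ • p)) :
    q ∈ subdiff J (w - τ • p) := by
  rw [mem_subdiff_iff_of_homogeneous hhom] at hp hq hpτ ⊢
  have hqp : ⟪q, p⟫ = ⟪p, p⟫ := by
    rw [inner_sub_right] at horth
    rw [real_inner_comm]
    linarith
  refine ⟨hq.1, ?_⟩
  rw [← hpτ.2, inner_sub_right, inner_sub_right, real_inner_smul_right, real_inner_smul_right,
    hp.2, hq.2, hqp]

theorem half_norm_sq_add_le_of_smul_sub_mem_subdiff {f w : EuclideanSpace ℝ (Fin n)} {s : ℝ}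
    (hs : 0 < s) (hw : (1 / s) • (f - w) ∈ subdiff J w) (v : EuclideanSpace ℝ (Fin n)) :
    (1 / 2) * ‖w - f‖ ^ 2 + s * J w + (1 / 2) * ‖v - w‖ ^ 2 ≤
      (1 / 2) * ‖v - f‖ ^ 2 + s * J v := by
  have hopt : ⟪f - w, v - w⟫ ≤ s * (J v - J w) := by
    have := hw v
    rw [real_inner_smul_left] at this
    have := mul_le_mul_of_nonneg_left this hs.le
    field_simp at this
    linarith
  have hexpand : ‖v - f‖ ^ 2 = ‖v - w‖ ^ 2 - 2 * ⟪f - w, v - w⟫ + ‖w - f‖ ^ 2 := by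
    rw [show v - f = (v - w) - (f - w) by abel, norm_sub_sq_real, real_inner_comm,
      norm_sub_rev f w]
  linarith

end Subdifferential

theorem exists_mem_Icc_castSucc_succ {α : Type*} [LinearOrder α] {K : ℕ} (t : Fin (K + 1) → α)
    {s : α} (hs : s ∈ Ioc (t 0) (t (Fin.last K))) :
    ∃ i : Fin K, s ∈ Icc (t i.castSucc) (t i.succ) := by
  suffices ∀ k : Fin (K + 1), s ≤ t k → ∃ i : Fin K, s ∈ Icc (t i.castSucc) (t i.succ) from
    this _ hs.2
  refine Fin.induction (fun h => absurd h (not_le.2 hs.1)) fun i ih h => ?_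
  by_cases hi : s ≤ t i.castSucc
  · exact ih hi
  · exact ⟨i, (not_le.1 hi).le, h⟩

section GradientFlow

variable {n K : ℕ} {J : EuclideanSpace ℝ (Fin n) → ℝ} {t : Fin (K + 1) → ℝ}
  {p : Fin K → EuclideanSpace ℝ (Fin n)} {u : ℝ → EuclideanSpace ℝ (Fin n)}

theorem mem_subdiff_of_gradientFlow
    (hhom : ∀ (s : ℝ) (u : EuclideanSpace ℝ (Fin n)), J (s • u) = |s| * J u)
    (horth : ∀ i : Fin K, ∀ q ∈ subdiff J (u (t i.castSucc)), ⟪p i, p i - q⟫ = 0)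
    (hmono : Monotone t) (hpmem : ∀ i : Fin K, p i ∈ subdiff J (u (t i.castSucc)))
    (hlin : ∀ i : Fin K, ∀ s ∈ Icc (t i.castSucc) (t i.succ),
      u s = u (t i.castSucc) - (s - t i.castSucc) • p i)
    (hsub : ∀ i : Fin K, ∀ s ∈ Icc (t i.castSucc) (t i.succ), p i ∈ subdiff J (u s)) :
    ∀ i : Fin K, ∀ s ∈ Icc (t i.castSucc) (t i.succ), ∀ j ≤ i, p j ∈ subdiff J (u s) := by
  have step : ∀ i : Fin K, (∀ j < i, p j ∈ subdiff J (u (t i.castSucc))) →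
      ∀ s ∈ Icc (t i.castSucc) (t i.succ), ∀ j ≤ i, p j ∈ subdiff J (u s) := by
    intro i hi s hs j hj
    obtain hj | rfl := hj.lt_or_eq
    · have hps := hsub i s hs
      rw [hlin i s hs] at hps ⊢
      exact mem_subdiff_sub_smul hhom (horth i _ (hi j hj)) (hpmem i) (hi j hj) hps
    · exact hsub j s hs
  have hbreak : ∀ k : Fin (K + 1), ∀ j : Fin K, j.castSucc < k → p j ∈ subdiff J (u (t k)) :=
    Fin.induction (fun j hj => absurd hj (Fin.not_lt_zero _)) fun i ih j hj =>
      step i (fun j' hj' => ih j' (Fin.castSucc_lt_castSucc_iff.2 hj')) _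
        ⟨hmono i.castSucc_le_succ, le_rfl⟩ j (Fin.castSucc_lt_succ_iff.1 hj)
  exact fun i => step i fun j hj => hbreak i.castSucc j (Fin.castSucc_lt_castSucc_iff.2 hj)

theorem sub_mem_smul_of_gradientFlow {S : Set (EuclideanSpace ℝ (Fin n))} (hS : Convex ℝ S)
    (hne : S.Nonempty) (hmono : Monotone t)
    (hlin : ∀ i : Fin K, ∀ s ∈ Icc (t i.castSucc) (t i.succ),
      u s = u (t i.castSucc) - (s - t i.castSucc) • p i)
    {i : Fin K} (hp : ∀ j ≤ i, p j ∈ S) {s : ℝ} (hs : s ∈ Icc (t i.castSucc) (t i.succ)) :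
    u (t 0) - u s ∈ (s - t 0) • S := by
  have step : ∀ i : Fin K, u (t 0) - u (t i.castSucc) ∈ (t i.castSucc - t 0) • S → p i ∈ S →
      ∀ s ∈ Icc (t i.castSucc) (t i.succ), u (t 0) - u s ∈ (s - t 0) • S := by
    intro i hi hpi s hs
    have hdecomp : u (t 0) - u s = (u (t 0) - u (t i.castSucc)) + (s - t i.castSucc) • p i := by
      rw [hlin i s hs]; abel
    rw [hdecomp, show s - t 0 = (t i.castSucc - t 0) + (s - t i.castSucc) by ring,
      hS.add_smul (sub_nonneg.2 (hmono (Fin.zero_le _))) (sub_nonneg.2 hs.1)]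
    exact add_mem_add hi (smul_mem_smul_set hpi)
  have hbreak : ∀ k : Fin (K + 1), (∀ j : Fin K, j.castSucc < k → p j ∈ S) →
      u (t 0) - u (t k) ∈ (t k - t 0) • S :=
    Fin.induction (fun _ => by simp [zero_smul_set hne]) fun i ih hp =>
      step i (ih fun j hj => hp j (hj.trans i.castSucc_lt_succ)) (hp i i.castSucc_lt_succ) _
        ⟨hmono i.castSucc_le_succ, le_rfl⟩
  exact step i (hbreak _ fun j hj => hp j (Fin.castSucc_lt_castSucc_iff.1 hj).le) (hp i le_rfl) s hs

end GradientFlow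

theorem gradient_flow_eq_variational_under_MINSUB_general {n K : ℕ}
    (J : EuclideanSpace ℝ (Fin n) → ℝ)
    (hhom : ∀ (s : ℝ) (u : EuclideanSpace ℝ (Fin n)), J (s • u) = |s| * J u)
    (hMINSUB : ∀ w phat : EuclideanSpace ℝ (Fin n), phat ∈ subdiff J w →
      (∀ q ∈ subdiff J w, ‖phat‖ ≤ ‖q‖) →
      ∀ q ∈ subdiff J w, ⟪phat, phat - q⟫ = 0)
    (f : EuclideanSpace ℝ (Fin n))
    (t : Fin (K + 1) → ℝ) (ht0 : t 0 = 0) (htmono : StrictMono t)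
    (p : Fin K → EuclideanSpace ℝ (Fin n))
    (u : ℝ → EuclideanSpace ℝ (Fin n))
    (hu0 : u 0 = f)
    (hpmem : ∀ i : Fin K, p i ∈ subdiff J (u (t i.castSucc)))
    (hpmin : ∀ i : Fin K, ∀ q ∈ subdiff J (u (t i.castSucc)), ‖p i‖ ≤ ‖q‖)
    (hlin : ∀ i : Fin K, ∀ s ∈ Set.Icc (t i.castSucc) (t i.succ),
      u s = u (t i.castSucc) - (s - t i.castSucc) • p i)
    (hsub : ∀ i : Fin K, ∀ s ∈ Set.Icc (t i.castSucc) (t i.succ),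
      p i ∈ subdiff J (u s)) :
    (∀ i : Fin K, ∀ s ∈ Set.Icc (t i.castSucc) (t i.succ),
      ∀ j : Fin K, j ≤ i → p j ∈ subdiff J (u s)) ∧
    (∀ s : ℝ, 0 < s → s ≤ t (Fin.last K) →
      ((1 / s) • (f - u s) ∈ subdiff J (u s)) ∧
      (∀ v : EuclideanSpace ℝ (Fin n),
        (1 / 2) * ‖u s - f‖ ^ 2 + s * J (u s) ≤ (1 / 2) * ‖v - f‖ ^ 2 + s * J v) ∧
      (∀ v : EuclideanSpace ℝ (Fin n),
        (1 / 2) * ‖v - f‖ ^ 2 + s * J v = (1 / 2) * ‖u s - f‖ ^ 2 + s * J (u s) →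
        v = u s)) := by
  have hpers := mem_subdiff_of_gradientFlow hhom (fun i => hMINSUB _ _ (hpmem i) (hpmin i))
    htmono.monotone hpmem hlin hsub
  refine ⟨hpers, fun s hs hsK => ?_⟩
  obtain ⟨i, hsi⟩ := exists_mem_Icc_castSucc_succ t (s := s) (by rw [ht0]; exact ⟨hs, hsK⟩)
  have hmem : (1 / s) • (f - u s) ∈ subdiff J (u s) := by
    have := sub_mem_smul_of_gradientFlow (convex_subdiff (u s)) ⟨_, hsub i s hsi⟩
      htmono.monotone hlin (hpers i s hsi) hsi
    rw [ht0, hu0, sub_zero, mem_smul_set_iff_inv_smul_mem₀ hs.ne'] at this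
    rwa [one_div]
  have hopt := half_norm_sq_add_le_of_smul_sub_mem_subdiff hs hmem
  refine ⟨hmem, fun v => by linarith [hopt v, sq_nonneg ‖v - u s‖], fun v hv => ?_⟩
  have hdist : ‖v - u s‖ ^ 2 = 0 := le_antisymm (by linarith [hopt v]) (sq_nonneg _)
  rwa [sq_eq_zero_iff, norm_eq_zero, sub_eq_zero] at hdist

/-- Equivalence of gradient flow and variational method under (PS)
and (MINSUB): for the piecewise-linear gradient flow `u` with breakpoints
`0 = t 0 < t 1 < ⋯ < t K` and minimal-norm subgradients `p i`, (1) earlier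
subgradients persist: `p j ∈ ∂J(u s)` for all `j ≤ i` and `s ∈ [t i, t (i+1)]`;
(2) for every `s ∈ (0, t K]`, `(f - u s)/s ∈ ∂J(u s)`, i.e. `u s` is the unique
minimizer of `v ↦ (1/2)‖v - f‖² + s J(v)`. -/
theorem gradient_flow_eq_variational_under_MINSUB {n K : ℕ} (hK : 0 < K)
    (J : EuclideanSpace ℝ (Fin n) → ℝ)
    (hconv : ConvexOn ℝ Set.univ J)
    (hhom : ∀ (s : ℝ) (u : EuclideanSpace ℝ (Fin n)), J (s • u) = |s| * J u)
    (hPS : ∃ F : Finset (EuclideanSpace ℝ (Fin n)),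
      convexHull ℝ (F : Set (EuclideanSpace ℝ (Fin n))) = subdiff J 0)
    (hMINSUB : ∀ w phat : EuclideanSpace ℝ (Fin n), phat ∈ subdiff J w →
      (∀ q ∈ subdiff J w, ‖phat‖ ≤ ‖q‖) →
      ∀ q ∈ subdiff J w, ⟪phat, phat - q⟫ = 0)
    (f : EuclideanSpace ℝ (Fin n))
    (t : Fin (K + 1) → ℝ) (ht0 : t 0 = 0) (htmono : StrictMono t)
    (p : Fin K → EuclideanSpace ℝ (Fin n))
    (u : ℝ → EuclideanSpace ℝ (Fin n))
    (hu0 : u 0 = f)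
    (hpmem : ∀ i : Fin K, p i ∈ subdiff J (u (t i.castSucc)))
    (hpmin : ∀ i : Fin K, ∀ q ∈ subdiff J (u (t i.castSucc)), ‖p i‖ ≤ ‖q‖)
    (hlin : ∀ i : Fin K, ∀ s ∈ Set.Icc (t i.castSucc) (t i.succ),
      u s = u (t i.castSucc) - (s - t i.castSucc) • p i)
    (hsub : ∀ i : Fin K, ∀ s ∈ Set.Icc (t i.castSucc) (t i.succ),
      p i ∈ subdiff J (u s)) :
    (∀ i : Fin K, ∀ s ∈ Set.Icc (t i.castSucc) (t i.succ),
      ∀ j : Fin K, j ≤ i → p j ∈ subdiff J (u s)) ∧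
    (∀ s : ℝ, 0 < s → s ≤ t (Fin.last K) →
      ((1 / s) • (f - u s) ∈ subdiff J (u s)) ∧
      (∀ v : EuclideanSpace ℝ (Fin n),
        (1 / 2) * ‖u s - f‖ ^ 2 + s * J (u s) ≤ (1 / 2) * ‖v - f‖ ^ 2 + s * J v) ∧
      (∀ v : EuclideanSpace ℝ (Fin n),
        (1 / 2) * ‖v - f‖ ^ 2 + s * J v = (1 / 2) * ‖u s - f‖ ^ 2 + s * J (u s) →
        v = u s)) :=
  gradient_flow_eq_variational_under_MINSUB_general J hhom hMINSUB f t ht0 htmono p u hu0 hpmem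
    hpmin hlin hsub
end

section
/- Let J : ℝ^n → ℝ be convex and absolutely one-homogeneous satisfying (MINSUB). Let u₀, u₁, …, u_{N−1} ∈ ℝ^n and p₁, …, p_N ∈ ℝ^n be such that for every 0 ≤ i ≤ N−1, p_{i+1} is the unique minimal-norm element of ∂J(u_i), and p_j ∈ ∂J(u_i) for all 1 ≤ j ≤ i+1. Then the successive differences are pairwise orthogonal: ⟨p_i − p_{i+1}, p_j − p_{j+1}⟩ = 0 for all 1 ≤ i, j ≤ N−1 with i ≠ j. Consequently, the spectral components φ^i = t_i·(p_i − p_{i+1}) (for any positive times t_i) of the gradient flow / variational spectral decomposition are mutually orthogonal. -/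
open RealInnerProductSpace

section InnerProductSpace

variable {E : Type*} [NormedAddCommGroup E] [InnerProductSpace ℝ E]

theorem inner_sub_eq_zero_of_inner_self_sub {a x y : E}
    (hx : ⟪a, a - x⟫ = 0) (hy : ⟪a, a - y⟫ = 0) : ⟪a, x - y⟫ = 0 := by
  have hxy : x - y = (a - y) - (a - x) := by abel
  rw [hxy, inner_sub_right, hx, hy, sub_zero]

variable {p : ℕ → E} {N : ℕ}

theorem inner_sub_succ_sub_succ_eq_zero_of_lt
    (h : ∀ j < N, ∀ k ≤ j, ⟪p j, p j - p k⟫ = 0) {i j : ℕ} (hij : i < j) (hj : j + 1 < N) :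
    ⟪p i - p (i + 1), p j - p (j + 1)⟫ = 0 := by
  have orth_of_le : ∀ m, j ≤ m → m < N → ⟪p m, p i - p (i + 1)⟫ = 0 := fun m hjm hm =>
    inner_sub_eq_zero_of_inner_self_sub (h m hm i (by omega)) (h m hm (i + 1) (by omega))
  rw [real_inner_comm, inner_sub_left, orth_of_le j le_rfl (by omega),
    orth_of_le (j + 1) (by omega) hj, sub_zero]

theorem inner_sub_succ_sub_succ_eq_zero
    (h : ∀ j < N, ∀ k ≤ j, ⟪p j, p j - p k⟫ = 0) {i j : ℕ}
    (hi : i + 1 < N) (hj : j + 1 < N) (hij : i ≠ j) :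
    ⟪p i - p (i + 1), p j - p (j + 1)⟫ = 0 := by
  rcases hij.lt_or_gt with hij | hji
  · exact inner_sub_succ_sub_succ_eq_zero_of_lt h hij hj
  · rw [real_inner_comm]
    exact inner_sub_succ_sub_succ_eq_zero_of_lt h hji hi

end InnerProductSpace

theorem spectral_components_orthogonal_general {n N : ℕ}
    (J : EuclideanSpace ℝ (Fin n) → ℝ)
    (hMINSUB : ∀ w phat : EuclideanSpace ℝ (Fin n), phat ∈ subdiff J w →
      (∀ q ∈ subdiff J w, ‖phat‖ ≤ ‖q‖) →
      ∀ q ∈ subdiff J w, ⟪phat, phat - q⟫ = 0)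
    (u p : ℕ → EuclideanSpace ℝ (Fin n))
    (hpmem : ∀ i < N, p i ∈ subdiff J (u i))
    (hpmin : ∀ i < N, ∀ q ∈ subdiff J (u i), ‖p i‖ ≤ ‖q‖)
    (hpersist : ∀ i < N, ∀ j ≤ i, p j ∈ subdiff J (u i)) :
    (∀ i j : ℕ, i + 1 < N → j + 1 < N → i ≠ j →
      ⟪p i - p (i + 1), p j - p (j + 1)⟫ = 0) ∧
    (∀ (τ : ℕ → ℝ), ∀ i j : ℕ, i + 1 < N → j + 1 < N → i ≠ j →
      ⟪τ i • (p i - p (i + 1)), τ j • (p j - p (j + 1))⟫ = 0) := by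
  have orth : ∀ j < N, ∀ k ≤ j, ⟪p j, p j - p k⟫ = 0 := fun j hj k hkj =>
    hMINSUB (u j) (p j) (hpmem j hj) (hpmin j hj) (p k) (hpersist j hj k hkj)
  refine ⟨fun i j hi hj hij => inner_sub_succ_sub_succ_eq_zero orth hi hj hij, ?_⟩
  intro τ i j hi hj hij
  rw [real_inner_smul_left, real_inner_smul_right, inner_sub_succ_sub_succ_eq_zero orth hi hj hij,
    mul_zero, mul_zero]

/-- Orthogonal decomposition under (MINSUB): if `p i` is, for each
`i < N`, the minimal-norm element of `∂J(u i)` (here `p i` plays the role of the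
paper's `p_{i+1}`), and all earlier subgradients persist (`p j ∈ ∂J(u i)` for
`j ≤ i`), then the successive differences `p i - p (i+1)` are pairwise orthogonal;
consequently the spectral components `φ^i = tᵢ • (p i - p (i+1))` are mutually
orthogonal for any times `tᵢ`. -/
theorem spectral_components_orthogonal {n N : ℕ}
    (J : EuclideanSpace ℝ (Fin n) → ℝ)
    (hconv : ConvexOn ℝ Set.univ J)
    (hhom : ∀ (s : ℝ) (u : EuclideanSpace ℝ (Fin n)), J (s • u) = |s| * J u)
    (hMINSUB : ∀ w phat : EuclideanSpace ℝ (Fin n), phat ∈ subdiff J w →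
      (∀ q ∈ subdiff J w, ‖phat‖ ≤ ‖q‖) →
      ∀ q ∈ subdiff J w, ⟪phat, phat - q⟫ = 0)
    (u p : ℕ → EuclideanSpace ℝ (Fin n))
    (hpmem : ∀ i < N, p i ∈ subdiff J (u i))
    (hpmin : ∀ i < N, ∀ q ∈ subdiff J (u i), ‖p i‖ ≤ ‖q‖)
    (hpersist : ∀ i < N, ∀ j ≤ i, p j ∈ subdiff J (u i)) :
    (∀ i j : ℕ, i + 1 < N → j + 1 < N → i ≠ j →
      ⟪p i - p (i + 1), p j - p (j + 1)⟫ = 0) ∧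
    (∀ (τ : ℕ → ℝ), ∀ i j : ℕ, i + 1 < N → j + 1 < N → i ≠ j →
      ⟪τ i • (p i - p (i + 1)), τ j • (p j - p (j + 1))⟫ = 0) :=
  spectral_components_orthogonal_general J hMINSUB u p hpmem hpmin hpersist
end

section
/- Let K be a real m×n matrix such that K·Kᵀ is diagonally dominant, i.e. (KKᵀ)_{ll} ≥ Σ_{j≠l} |(KKᵀ)_{lj}| for every l, and define J : ℝ^n → ℝ by J(u) = ‖Ku‖₁ = Σ_{l=1}^m |(Ku)_l|. Then J satisfies (MINSUB): for every u ∈ ℝ^n, the unique minimal-norm element p̂ of ∂J(u) satisfies ⟨p̂, p̂ − q⟩ = 0 for all q ∈ ∂J(u). -/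
/-!
Choose `s` with `s l = sign ((K u) l)` on the support of `K u` and `|s l| ≤ 1` elsewhere, minimising
`‖Kᵀ s‖²`. Diagonal dominance of `K Kᵀ` makes the exact minimiser along each free coordinate `l`
feasible, so `(K Kᵀ s) l = 0` wherever `(K u) l = 0`. Then `p = Kᵀ s` is a subgradient, and `J` is
affine with slope `‖p‖²` along `u + t p` for small `|t|`; hence `⟪r, p⟫ = ‖p‖²` for every
subgradient `r`. This pins the minimal-norm subgradient down as `p`, and `⟪p, p - q⟫ = 0` follows.
-/

open RealInnerProductSpace Matrix

open Filter Topology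

variable {ι : Type*}

/-- The subdifferential of the `ℓ¹`-norm at `b`. -/
def signBox (b : ι → ℝ) : Set (ι → ℝ) :=
  Set.univ.pi fun l => if b l = 0 then Set.Icc (-1) 1 else {Real.sign (b l)}

theorem isCompact_signBox (b : ι → ℝ) : IsCompact (signBox b) :=
  isCompact_univ_pi fun l => by split_ifs <;> simp [isCompact_Icc]

theorem sign_mem_signBox (b : ι → ℝ) : (fun l => Real.sign (b l)) ∈ signBox b := by
  intro l _
  by_cases h : b l = 0 <;> simp [h]

theorem eq_sign_of_mem_signBox {b s : ι → ℝ} (hs : s ∈ signBox b) {l : ι} (hl : b l ≠ 0) :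
    s l = Real.sign (b l) := by
  simpa [hl] using hs l (Set.mem_univ l)

theorem abs_le_one_of_mem_signBox {b s : ι → ℝ} (hs : s ∈ signBox b) (l : ι) : |s l| ≤ 1 := by
  by_cases hl : b l = 0
  · simpa [hl, abs_le] using hs l (Set.mem_univ l)
  · rw [eq_sign_of_mem_signBox hs hl]
    rcases Real.sign_apply_eq_of_ne_zero _ hl with h | h <;> simp [h]

theorem mul_eq_abs_of_mem_signBox {b s : ι → ℝ} (hs : s ∈ signBox b) (l : ι) :
    s l * b l = |b l| := by
  by_cases hl : b l = 0
  · simp [hl]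
  · rw [eq_sign_of_mem_signBox hs hl]
    rcases lt_or_gt_of_ne hl with h | h
    · rw [Real.sign_of_neg h, abs_of_neg h]; ring
    · rw [Real.sign_of_pos h, abs_of_pos h]; ring

theorem add_smul_single_mem_signBox [DecidableEq ι] {b s : ι → ℝ} (hs : s ∈ signBox b) {j : ι}
    (hj : b j = 0) {t : ℝ} (ht : |s j + t| ≤ 1) : s + t • Pi.single j 1 ∈ signBox b := by
  intro l _
  by_cases hl : l = j
  · subst hl
    simpa [hj, abs_le] using ht
  · simpa [hl] using hs l (Set.mem_univ l)

section DiagonallyDominant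

variable [Fintype ι] [DecidableEq ι] {A : Matrix ι ι ℝ}

theorem dotProduct_mulVec_add_smul_single (hA : A.IsSymm) (s : ι → ℝ) (j : ι) (t : ℝ) :
    (s + t • Pi.single j 1) ⬝ᵥ A *ᵥ (s + t • Pi.single j 1) =
      s ⬝ᵥ A *ᵥ s + 2 * t * (A *ᵥ s) j + t ^ 2 * A j j := by
  have hcol : s ⬝ᵥ A.col j = (A *ᵥ s) j := by
    simp only [dotProduct, mulVec, col_apply, hA.apply, mul_comm]
  simp only [mulVec_add, mulVec_smul, add_dotProduct, dotProduct_add, smul_dotProduct,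
    dotProduct_smul, single_one_dotProduct, mulVec_single_one, col_apply, smul_eq_mul, hcol]
  ring

theorem mulVec_apply_eq_zero_of_forall_le (hA : A.IsSymm)
    (hdd : ∀ l, ∑ k ∈ Finset.univ.erase l, |A l k| ≤ A l l) {s : ι → ℝ}
    (hs : ∀ k, |s k| ≤ 1) {j : ι}
    (hmin : ∀ t, |s j + t| ≤ 1 →
      s ⬝ᵥ A *ᵥ s ≤ (s + t • Pi.single j 1) ⬝ᵥ A *ᵥ (s + t • Pi.single j 1)) :
    (A *ᵥ s) j = 0 := by
  set r := ∑ k ∈ Finset.univ.erase j, A j k * s k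
  have hsplit : (A *ᵥ s) j = A j j * s j + r := by
    change ∑ k, A j k * s k = _
    rw [← Finset.add_sum_erase _ _ (Finset.mem_univ j)]
  have hr : |r| ≤ A j j := by
    refine (Finset.abs_sum_le_sum_abs _ _).trans <|
      (Finset.sum_le_sum fun k _ => ?_).trans (hdd j)
    rw [abs_mul]
    exact mul_le_of_le_one_right (abs_nonneg _) (hs k)
  rcases (abs_nonneg r |>.trans hr).eq_or_lt with ha | ha
  · rw [← ha, abs_nonpos_iff] at hr
    rw [hsplit, ← ha, hr]
    ring
  -- the exact minimiser `s j - (A s) j / A j j = -r / A j j` along coordinate `j` is feasible,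
  -- by diagonal dominance
  have hfeas : |s j + -(A *ᵥ s) j / A j j| ≤ 1 := by
    rw [hsplit, show s j + -(A j j * s j + r) / A j j = -r / A j j by field_simp; ring,
      abs_div, abs_neg, abs_of_pos ha]
    exact div_le_one_of_le₀ hr ha.le
  have hdecr := hmin _ hfeas
  rw [dotProduct_mulVec_add_smul_single hA] at hdecr
  generalize (A *ᵥ s) j = g at hdecr ⊢
  have : g ^ 2 / A j j ≤ 0 := by
    field_simp at hdecr ⊢
    linarith
  simpa [ha.ne'] using le_antisymm this (div_nonneg (sq_nonneg g) ha.le)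

theorem exists_mem_signBox_mulVec_eq_zero (hA : A.IsSymm)
    (hdd : ∀ l, ∑ k ∈ Finset.univ.erase l, |A l k| ≤ A l l) (b : ι → ℝ) :
    ∃ s ∈ signBox b, ∀ l, b l = 0 → (A *ᵥ s) l = 0 := by
  obtain ⟨s, hs, hmin⟩ := (isCompact_signBox b).exists_isMinOn ⟨_, sign_mem_signBox b⟩
    (f := fun s => s ⬝ᵥ A *ᵥ s) (by fun_prop)
  exact ⟨s, hs, fun l hl => mulVec_apply_eq_zero_of_forall_le hA hdd
    (abs_le_one_of_mem_signBox hs) fun t ht => hmin (add_smul_single_mem_signBox hs hl ht)⟩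

end DiagonallyDominant

theorem eventually_abs_add_mul {b : ℝ} (hb : b ≠ 0) (c : ℝ) :
    ∀ᶠ t in 𝓝 (0 : ℝ), |b + t * c| = |b| + t * (Real.sign b * c) := by
  have hcont : Continuous fun t : ℝ => b + t * c := by fun_prop
  have hlim : Tendsto (fun t : ℝ => b + t * c) (𝓝 0) (𝓝 b) := by simpa using hcont.tendsto 0
  rcases lt_or_gt_of_ne hb with h | h
  · filter_upwards [hlim.eventually (gt_mem_nhds h)] with t ht
    rw [abs_of_neg ht, abs_of_neg h, Real.sign_of_neg h]
    ring
  · filter_upwards [hlim.eventually (lt_mem_nhds h)] with t ht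
    rw [abs_of_pos ht, abs_of_pos h, Real.sign_of_pos h]
    ring

theorem eventually_sum_abs_add_mul [Fintype ι] {b s g : ι → ℝ} (hs : s ∈ signBox b)
    (hg : ∀ l, b l = 0 → g l = 0) :
    ∀ᶠ t in 𝓝 (0 : ℝ), ∑ l, |b l + t * g l| = ∑ l, |b l| + t * (s ⬝ᵥ g) := by
  have hcoord : ∀ l, ∀ᶠ t in 𝓝 (0 : ℝ), |b l + t * g l| = |b l| + t * (s l * g l) := by
    intro l
    by_cases hl : b l = 0
    · exact .of_forall fun t => by simp [hl, hg l hl]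
    · simpa only [eq_sign_of_mem_signBox hs hl] using eventually_abs_add_mul hl (g l)
  filter_upwards [eventually_all.2 hcoord] with t ht
  simp only [ht, Finset.sum_add_distrib, dotProduct, Finset.mul_sum]

theorem eq_of_eventually_mul_le {a b : ℝ} (h : ∀ᶠ t in 𝓝 (0 : ℝ), t * a ≤ t * b) : a = b := by
  obtain ⟨t, hab, ht⟩ := ((h.filter_mono nhdsWithin_le_nhds).and
    (self_mem_nhdsWithin (s := Set.Ioi 0))).exists
  obtain ⟨t', hab', ht'⟩ := ((h.filter_mono nhdsWithin_le_nhds).and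
    (self_mem_nhdsWithin (s := Set.Iio 0))).exists
  exact le_antisymm (le_of_mul_le_mul_left hab ht) ((mul_le_mul_left_of_neg ht').1 hab')

theorem inner_eq_of_mem_subdiff {n : ℕ} {J : EuclideanSpace ℝ (Fin n) → ℝ}
    {u d : EuclideanSpace ℝ (Fin n)} {c : ℝ}
    (hlin : ∀ᶠ t in 𝓝 (0 : ℝ), J (u + t • d) = J u + t * c) {r : EuclideanSpace ℝ (Fin n)}
    (hr : r ∈ subdiff J u) : ⟪r, d⟫ = c := by
  refine eq_of_eventually_mul_le ?_
  filter_upwards [hlin] with t ht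
  have := hr (u + t • d)
  rw [add_sub_cancel_left, real_inner_smul_right, ht] at this
  linarith

theorem eq_of_norm_le_of_inner_eq {F : Type*} [NormedAddCommGroup F] [InnerProductSpace ℝ F]
    {x y : F} (hle : ‖x‖ ≤ ‖y‖) (h : ⟪x, y⟫ = ⟪y, y⟫) : x = y := by
  have : ‖x - y‖ ^ 2 ≤ 0 := by
    rw [norm_sub_sq_real, h, real_inner_self_eq_norm_sq]
    nlinarith [norm_nonneg x]
  exact sub_eq_zero.1 <| norm_eq_zero.1 <|
    pow_eq_zero_iff two_ne_zero |>.1 (le_antisymm this (sq_nonneg _))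

section L1NormMulVec

variable [Fintype ι] {n : ℕ} (K : Matrix ι (Fin n) ℝ)

def l1NormMulVec (v : EuclideanSpace ℝ (Fin n)) : ℝ := ∑ l, |(K *ᵥ v) l|

theorem inner_toLp_transpose_mulVec (s : ι → ℝ) (w : EuclideanSpace ℝ (Fin n)) :
    ⟪WithLp.toLp 2 (Kᵀ *ᵥ s), w⟫ = s ⬝ᵥ K *ᵥ w := by
  rw [EuclideanSpace.inner_eq_star_dotProduct, WithLp.ofLp_toLp, star_trivial, mulVec_transpose,
    dotProduct_comm, dotProduct_mulVec]

theorem toLp_transpose_mulVec_mem_subdiff {u : EuclideanSpace ℝ (Fin n)} {s : ι → ℝ}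
    (hs : s ∈ signBox (K *ᵥ u)) :
    WithLp.toLp 2 (Kᵀ *ᵥ s) ∈ subdiff (l1NormMulVec K) u := by
  intro v
  have hu : s ⬝ᵥ K *ᵥ u = ∑ l, |(K *ᵥ u) l| :=
    Finset.sum_congr rfl fun l _ => mul_eq_abs_of_mem_signBox hs l
  have hv : s ⬝ᵥ K *ᵥ v ≤ ∑ l, |(K *ᵥ v) l| := Finset.sum_le_sum fun l _ =>
    (le_abs_self _).trans <| by
      rw [abs_mul]; exact mul_le_of_le_one_left (abs_nonneg _) (abs_le_one_of_mem_signBox hs l)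
  simp only [l1NormMulVec, inner_toLp_transpose_mulVec, WithLp.ofLp_sub, mulVec_sub,
    dotProduct_sub]
  linarith

theorem eventually_l1NormMulVec_add_smul {u : EuclideanSpace ℝ (Fin n)} {s : ι → ℝ}
    (hs : s ∈ signBox (K *ᵥ u)) (hKs : ∀ l, (K *ᵥ u) l = 0 → ((K * Kᵀ) *ᵥ s) l = 0) :
    ∀ᶠ t in 𝓝 (0 : ℝ), l1NormMulVec K (u + t • WithLp.toLp 2 (Kᵀ *ᵥ s)) =
      l1NormMulVec K u + t * ⟪WithLp.toLp 2 (Kᵀ *ᵥ s), WithLp.toLp 2 (Kᵀ *ᵥ s)⟫ := by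
  simpa only [l1NormMulVec, WithLp.ofLp_add, WithLp.ofLp_smul, WithLp.ofLp_toLp, mulVec_add,
    mulVec_smul, mulVec_mulVec, Pi.add_apply, Pi.smul_apply, smul_eq_mul,
    inner_toLp_transpose_mulVec]
    using eventually_sum_abs_add_mul hs hKs

end L1NormMulVec

/-- (DDL1) implies (MINSUB): if `K Kᵀ` is diagonally dominant and
`J u = ‖K u‖₁`, then for every `u` the minimal-norm element `phat` of `∂J(u)`
satisfies `⟪phat, phat - q⟫ = 0` for all `q ∈ ∂J(u)`. -/
theorem DDL1_implies_MINSUB {m n : ℕ}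
    (K : Matrix (Fin m) (Fin n) ℝ)
    (hdd : ∀ l : Fin m,
      ∑ j ∈ Finset.univ.erase l, |(K * Kᵀ) l j| ≤ (K * Kᵀ) l l)
    (J : EuclideanSpace ℝ (Fin n) → ℝ)
    (hJ : ∀ u : EuclideanSpace ℝ (Fin n), J u = ∑ l : Fin m, |K.mulVec u l|) :
    ∀ u : EuclideanSpace ℝ (Fin n), ∀ phat ∈ subdiff J u,
      (∀ q ∈ subdiff J u, ‖phat‖ ≤ ‖q‖) →
      ∀ q ∈ subdiff J u, ⟪phat, phat - q⟫ = 0 := by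
  intro u phat hphat hmin q hq
  obtain rfl : J = l1NormMulVec K := funext hJ
  have hsymm : (K * Kᵀ).IsSymm := by rw [IsSymm, transpose_mul, transpose_transpose]
  obtain ⟨s, hs, hKs⟩ := exists_mem_signBox_mulVec_eq_zero hsymm hdd (K *ᵥ u)
  set p := WithLp.toLp 2 (Kᵀ *ᵥ s)
  have hinner : ∀ r ∈ subdiff (l1NormMulVec K) u, ⟪r, p⟫ = ⟪p, p⟫ := fun r hr =>
    inner_eq_of_mem_subdiff (eventually_l1NormMulVec_add_smul K hs hKs) hr
  have hp : p ∈ subdiff (l1NormMulVec K) u := toLp_transpose_mulVec_mem_subdiff K hs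
  obtain rfl : phat = p := eq_of_norm_le_of_inner_eq (hmin p hp) (hinner phat hphat)
  rw [inner_sub_right, ← hinner q hq, real_inner_comm, sub_self]
end
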